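/- Let a_n be the total number of 1s summed over all multus bitstrings of length n. Then \sum_{n\ge0} a_n z^n = z^2(2-z)/(1-2z+z^2-z^3)^2 as formal power series; in particular a_2=2, a_3=7, a_4=16, a_5=34. -/

import Mathlib

open PowerSeries

/-- A bitstring is *multus* if every `1` bit has at least one neighboring `1`. -/
def Multus (l : List Bool) : Prop :=
  ∀ i : ℕ, l[i]? = some true →
    (0 < i ∧ l[i - 1]? = some true) ∨ l[i + 1]? = some true

open Classical in
/-- `a n` : total number of `1`s summed over all multus bitstrings of length `n`. -/
noncomputable def multusBitsum (n : ℕ) : ℕ :=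
  ∑ v : Fin n → Bool, if Multus (List.ofFn v) then (List.ofFn v).count true else 0


inductive MSt | A | B | C | D
deriving DecidableEq

def st : List Bool → MSt
  | [] => .A
  | false :: l => match st l with | .A => .A | .C => .A | _ => .D
  | true :: l => match st l with | .A => .B | .B => .C | .C => .C | .D => .D

def mOK : Bool → List Bool → Bool
  | _, [] => true
  | p, b :: l => (!b || p || l.headI) && mOK b l

def Aux (p : Bool) (l : List Bool) : Prop :=
  ∀ i : ℕ, l[i]? = some true →
    (if i = 0 then p = true else l[i - 1]? = some true) ∨ l[i + 1]? = some true

lemma multus_iff_aux (l : List Bool) : Multus l ↔ Aux false l := by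
  constructor
  · intro h i hi
    rcases h i hi with ⟨hpos, h'⟩ | h'
    · rw [if_neg (by omega)]; exact Or.inl h'
    · exact Or.inr h'
  · intro h i hi
    rcases h i hi with h' | h'
    · by_cases h0 : i = 0
      · subst h0; simp at h'
      · rw [if_neg h0] at h'
        exact Or.inl ⟨by omega, h'⟩
    · exact Or.inr h'

lemma aux_cons (p b : Bool) (l : List Bool) :
    Aux p (b :: l) ↔ ((b = true → p = true ∨ l[0]? = some true) ∧ Aux b l) := by
  constructor
  · intro h
    refine ⟨fun hb => ?_, fun j hj => ?_⟩
    · have := h 0 (by simp [hb])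
      simpa using this
    · have := h (j + 1) (by simpa using hj)
      rcases this with h' | h'
      · rw [if_neg (Nat.succ_ne_zero j)] at h'
        left
        match j with
        | 0 => simp at h'; simp [h']
        | k + 1 => rw [if_neg (Nat.succ_ne_zero k)]; simpa using h'
      · right; simpa using h'
  · rintro ⟨h0, h⟩ i hi
    match i with
    | 0 =>
      simp only [List.getElem?_cons_zero, Option.some.injEq] at hi
      rcases h0 hi with hp | hl
      · left; simpa using hp
      · right; simpa using hl
    | j + 1 =>
      simp only [List.getElem?_cons_succ] at hi
      rcases h j hi with h' | h'
      · left
        rw [if_neg (Nat.succ_ne_zero j)]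
        match j with
        | 0 => simp at h' ⊢; exact h'
        | k + 1 => rw [if_neg (Nat.succ_ne_zero k)] at h'; simpa using h'
      · right; simpa using h'

lemma aux_iff_mOK (l : List Bool) : ∀ p, Aux p l ↔ mOK p l = true := by
  induction l with
  | nil => intro p; simp [mOK, Aux]
  | cons b t ih =>
    intro p
    rw [aux_cons, ih]
    have hh : (t.headI = true) ↔ t[0]? = some true := by
      cases t with
      | nil => simp [List.headI]
      | cons x s => simp [List.headI]
    cases b <;> cases p <;> simp [mOK, ← hh]

lemma headI_st (l : List Bool) :
    (st l = .A → l.headI = false) ∧ (st l = .B → l.headI = true) ∧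
    (st l = .C → l.headI = true) := by
  cases l with
  | nil => simp [st, List.headI]
  | cons b t =>
    cases b <;> rcases h : st t <;> simp [st, h, List.headI]

lemma mOK_iff_st (l : List Bool) : ∀ p,
    mOK p l = true ↔ (st l = .A ∨ st l = .C ∨ (p = true ∧ st l = .B)) := by
  induction l with
  | nil => intro p; simp [mOK, st]
  | cons b t ih =>
    intro p
    obtain ⟨hA, hB, hC⟩ := headI_st t
    cases b <;> rcases h : st t with _|_|_|_ <;>
      simp [mOK, st, h, ih, hA, hB, hC]

lemma multus_iff_st (l : List Bool) : Multus l ↔ (st l = .A ∨ st l = .C) := by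
  rw [multus_iff_aux, aux_iff_mOK, mOK_iff_st]
  simp

open Classical in
noncomputable def cnt (s : MSt) (n : ℕ) : ℕ :=
  ∑ v : Fin n → Bool, if st (List.ofFn v) = s then 1 else 0

open Classical in
noncomputable def bits (s : MSt) (n : ℕ) : ℕ :=
  ∑ v : Fin n → Bool, if st (List.ofFn v) = s then (List.ofFn v).count true else 0

lemma multusBitsum_eq (n : ℕ) : multusBitsum n = bits .A n + bits .C n := by
  classical
  unfold multusBitsum bits
  rw [← Finset.sum_add_distrib]
  refine Finset.sum_congr rfl fun v _ => ?_
  rw [show (Multus (List.ofFn v)) = (st (List.ofFn v) = .A ∨ st (List.ofFn v) = .C) from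
    propext (multus_iff_st _)]
  rcases h : st (List.ofFn v) with _|_|_|_ <;> simp [h]

lemma sum_succ (f : List Bool → ℕ) (n : ℕ) :
    ∑ v : Fin (n+1) → Bool, f (List.ofFn v) =
      ∑ w : Fin n → Bool, (f (false :: List.ofFn w) + f (true :: List.ofFn w)) := by
  classical
  have key := Fintype.sum_equiv (Fin.consEquiv (fun _ : Fin (n+1) => Bool))
    (fun q => f (q.1 :: List.ofFn q.2)) (fun v => f (List.ofFn v)) ?_
  · rw [← key, Fintype.sum_prod_type_right]
    refine Finset.sum_congr rfl fun w _ => ?_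
    simp [Fintype.sum_bool, add_comm]
  · rintro ⟨b, w⟩
    show f (b :: List.ofFn w) = f (List.ofFn (Fin.cons b w))
    congr 1
    rw [List.ofFn_succ]
    simp

lemma cnt_A_succ (n : ℕ) : cnt .A (n+1) = cnt .A n + cnt .C n := by
  classical
  unfold cnt
  rw [sum_succ (fun l => if st l = .A then 1 else 0) n, ← Finset.sum_add_distrib]
  refine Finset.sum_congr rfl fun w _ => ?_
  rcases h : st (List.ofFn w) with _|_|_|_ <;> simp [st, h]

lemma cnt_B_succ (n : ℕ) : cnt .B (n+1) = cnt .A n := by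
  classical
  unfold cnt
  rw [sum_succ (fun l => if st l = .B then 1 else 0) n]
  refine Finset.sum_congr rfl fun w _ => ?_
  rcases h : st (List.ofFn w) with _|_|_|_ <;> simp [st, h]

lemma cnt_C_succ (n : ℕ) : cnt .C (n+1) = cnt .B n + cnt .C n := by
  classical
  unfold cnt
  rw [sum_succ (fun l => if st l = .C then 1 else 0) n, ← Finset.sum_add_distrib]
  refine Finset.sum_congr rfl fun w _ => ?_
  rcases h : st (List.ofFn w) with _|_|_|_ <;> simp [st, h]

lemma bits_A_succ (n : ℕ) : bits .A (n+1) = bits .A n + bits .C n := by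
  classical
  unfold bits
  rw [sum_succ (fun l => if st l = .A then l.count true else 0) n, ← Finset.sum_add_distrib]
  refine Finset.sum_congr rfl fun w _ => ?_
  rcases h : st (List.ofFn w) with _|_|_|_ <;> simp [st, h, List.count_cons]

lemma bits_B_succ (n : ℕ) : bits .B (n+1) = bits .A n + cnt .A n := by
  classical
  unfold bits cnt
  rw [sum_succ (fun l => if st l = .B then l.count true else 0) n, ← Finset.sum_add_distrib]
  refine Finset.sum_congr rfl fun w _ => ?_
  rcases h : st (List.ofFn w) with _|_|_|_ <;> simp [st, h, List.count_cons]

lemma bits_C_succ (n : ℕ) :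
    bits .C (n+1) = bits .B n + bits .C n + (cnt .B n + cnt .C n) := by
  classical
  unfold bits cnt
  rw [sum_succ (fun l => if st l = .C then l.count true else 0) n,
    ← Finset.sum_add_distrib, ← Finset.sum_add_distrib, ← Finset.sum_add_distrib]
  refine Finset.sum_congr rfl fun w _ => ?_
  rcases h : st (List.ofFn w) with _|_|_|_ <;> simp [st, h, List.count_cons]

lemma cnt_zero (s : MSt) : cnt s 0 = if s = .A then 1 else 0 := by
  classical
  unfold cnt
  rw [Fintype.sum_eq_single (fun i => false) (fun v hv => absurd (funext fun i => i.elim0) hv)]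
  rcases s with _|_|_|_ <;> simp [st]

lemma bits_zero (s : MSt) : bits s 0 = 0 := by
  classical
  unfold bits
  rw [Fintype.sum_eq_single (fun i => false) (fun v hv => absurd (funext fun i => i.elim0) hv)]
  simp

noncomputable def psc (s : MSt) : PowerSeries ℚ := PowerSeries.mk fun n => (cnt s n : ℚ)
noncomputable def psb (s : MSt) : PowerSeries ℚ := PowerSeries.mk fun n => (bits s n : ℚ)

lemma ps1 : psc .A = 1 + X * (psc .A + psc .C) := by
  ext n
  rcases n with _ | n
  · simp [psc, cnt_zero]
  · simp only [psc, map_add, coeff_mk, coeff_succ_X_mul, coeff_one, Nat.succ_ne_zero, if_false]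
    rw [cnt_A_succ]; push_cast; ring

lemma ps2 : psc .B = X * psc .A := by
  ext n
  rcases n with _ | n
  · simp [psc, cnt_zero]
  · simp only [psc, coeff_mk, coeff_succ_X_mul]
    rw [cnt_B_succ]

lemma ps3 : psc .C = X * (psc .B + psc .C) := by
  ext n
  rcases n with _ | n
  · simp [psc, cnt_zero]
  · simp only [psc, map_add, coeff_mk, coeff_succ_X_mul]
    rw [cnt_C_succ]; push_cast; ring

lemma ps4 : psb .A = X * (psb .A + psb .C) := by
  ext n
  rcases n with _ | n
  · simp [psb, bits_zero]
  · simp only [psb, map_add, coeff_mk, coeff_succ_X_mul]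
    rw [bits_A_succ]; push_cast; ring

lemma ps5 : psb .B = X * (psb .A + psc .A) := by
  ext n
  rcases n with _ | n
  · simp [psb, bits_zero]
  · simp only [psb, psc, map_add, coeff_mk, coeff_succ_X_mul]
    rw [bits_B_succ]; push_cast; ring

lemma ps6 : psb .C = X * (psb .B + psb .C + psc .B + psc .C) := by
  ext n
  rcases n with _ | n
  · simp [psb, bits_zero]
  · simp only [psb, psc, map_add, coeff_mk, coeff_succ_X_mul]
    rw [bits_C_succ]; push_cast; ring


/-- `∑ aₙ zⁿ = z²(2-z)/(1-2z+z²-z³)²`, stated as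
`(∑ aₙ zⁿ)(1-2z+z²-z³)² = z²(2-z)` in `ℚ⟦z⟧`;
in particular `a₂=2, a₃=7, a₄=16, a₅=34`. -/
theorem multus_bitsum_gf :
    (PowerSeries.mk fun n => (multusBitsum n : ℚ)) *
      (1 - 2 * (X : PowerSeries ℚ) + X ^ 2 - X ^ 3) ^ 2 = X ^ 2 * (2 - X) ∧
    multusBitsum 2 = 2 ∧ multusBitsum 3 = 7 ∧ multusBitsum 4 = 16 ∧
    multusBitsum 5 = 34 := by
  
  constructor
  · have hmk : (PowerSeries.mk fun n => (multusBitsum n : ℚ)) = psb .A + psb .C := by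
      ext n
      simp [psb, multusBitsum_eq]
    rw [hmk]
    have h1 := ps1; have h2 := ps2; have h3 := ps3
    have h4 := ps4; have h5 := ps5; have h6 := ps6
    set x : PowerSeries ℚ := X
    set A := psc MSt.A; set B := psc MSt.B; set Cc := psc MSt.C
    set P := psb MSt.A; set Q := psb MSt.B; set R := psb MSt.C
    linear_combination (2*x^2 - x^3) * h1 + (x - x^2 + x^4) * h2 + (x - x^2 + 2*x^3) * h3 +
      ((1 - 2*x + x^2 - x^3) * (1 - x + x^2)) * h4 + (x * (1 - 2*x + x^2 - x^3)) * h5 +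
      (1 - 2*x + x^2 - x^3) * h6
  · have cA0 : cnt .A 0 = 1 := by rw [cnt_zero]; rfl
    have cB0 : cnt .B 0 = 0 := by rw [cnt_zero]; rfl
    have cC0 : cnt .C 0 = 0 := by rw [cnt_zero]; rfl
    have cA1 : cnt .A 1 = 1 := by rw [cnt_A_succ 0, cA0, cC0]
    have cB1 : cnt .B 1 = 1 := by rw [cnt_B_succ 0, cA0]
    have cC1 : cnt .C 1 = 0 := by rw [cnt_C_succ 0, cB0, cC0]
    have cA2 : cnt .A 2 = 1 := by rw [cnt_A_succ 1, cA1, cC1]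
    have cB2 : cnt .B 2 = 1 := by rw [cnt_B_succ 1, cA1]
    have cC2 : cnt .C 2 = 1 := by rw [cnt_C_succ 1, cB1, cC1]
    have cA3 : cnt .A 3 = 2 := by rw [cnt_A_succ 2, cA2, cC2]
    have cB3 : cnt .B 3 = 1 := by rw [cnt_B_succ 2, cA2]
    have cC3 : cnt .C 3 = 2 := by rw [cnt_C_succ 2, cB2, cC2]
    have cA4 : cnt .A 4 = 4 := by rw [cnt_A_succ 3, cA3, cC3]
    have cB4 : cnt .B 4 = 2 := by rw [cnt_B_succ 3, cA3]
    have cC4 : cnt .C 4 = 3 := by rw [cnt_C_succ 3, cB3, cC3]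
    have bA0 : bits .A 0 = 0 := bits_zero _
    have bB0 : bits .B 0 = 0 := bits_zero _
    have bC0 : bits .C 0 = 0 := bits_zero _
    have bA1 : bits .A 1 = 0 := by rw [bits_A_succ 0, bA0, bC0]
    have bB1 : bits .B 1 = 1 := by rw [bits_B_succ 0, bA0, cA0]
    have bC1 : bits .C 1 = 0 := by rw [bits_C_succ 0, bB0, bC0, cB0, cC0]
    have bA2 : bits .A 2 = 0 := by rw [bits_A_succ 1, bA1, bC1]
    have bB2 : bits .B 2 = 1 := by rw [bits_B_succ 1, bA1, cA1]
    have bC2 : bits .C 2 = 2 := by rw [bits_C_succ 1, bB1, bC1, cB1, cC1]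
    have bA3 : bits .A 3 = 2 := by rw [bits_A_succ 2, bA2, bC2]
    have bB3 : bits .B 3 = 1 := by rw [bits_B_succ 2, bA2, cA2]
    have bC3 : bits .C 3 = 5 := by rw [bits_C_succ 2, bB2, bC2, cB2, cC2]
    have bA4 : bits .A 4 = 7 := by rw [bits_A_succ 3, bA3, bC3]
    have bB4 : bits .B 4 = 4 := by rw [bits_B_succ 3, bA3, cA3]
    have bC4 : bits .C 4 = 9 := by rw [bits_C_succ 3, bB3, bC3, cB3, cC3]
    have bA5 : bits .A 5 = 16 := by rw [bits_A_succ 4, bA4, bC4]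
    have bC5 : bits .C 5 = 18 := by rw [bits_C_succ 4, bB4, bC4, cB4, cC4]
    refine ⟨?_, ?_, ?_, ?_⟩ <;> rw [multusBitsum_eq]
    · rw [bA2, bC2]
    · rw [bA3, bC3]
    · rw [bA4, bC4]
    · rw [bA5, bC5]
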